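/- Let φ: B(S,16ρ) → ℝ/ℤ be a locally quadratic form with associated bilinear form φ''. Then the function ψ(n) := φ(n) − (1/2)φ''(n,n) is locally affine-linear: ψ(a+b) − ψ(a) − ψ(b) is constant for a, b with a, b, a+b in the Bohr set. -/
import Mathlib


open scoped BigOperators Classical
open Finset

noncomputable section

variable {G : Type*} [AddCommGroup G] [Fintype G]

def bohr (S : Finset (G →+ AddCircle (1 : ℝ))) (ρ : ℝ) : Finset G :=
  Finset.univ.filter fun x => ∀ α ∈ S, ‖α x‖ < ρ

/-- `φ` is locally quadratic on `B(S, 16ρ)`. -/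
def IsLocallyQuadratic (S : Finset (G →+ AddCircle (1 : ℝ))) (ρ : ℝ)
    (φ : G → AddCircle (1 : ℝ)) : Prop :=
  ∀ x h₁ h₂ h₃ : G,
    (x ∈ bohr S (16 * ρ)) → (x + h₁ ∈ bohr S (16 * ρ)) → (x + h₂ ∈ bohr S (16 * ρ)) →
    (x + h₃ ∈ bohr S (16 * ρ)) → (x + h₁ + h₂ ∈ bohr S (16 * ρ)) →
    (x + h₁ + h₃ ∈ bohr S (16 * ρ)) → (x + h₂ + h₃ ∈ bohr S (16 * ρ)) →
    (x + h₁ + h₂ + h₃ ∈ bohr S (16 * ρ)) →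
      φ (x + h₁ + h₂ + h₃) - φ (x + h₁ + h₂) - φ (x + h₁ + h₃) - φ (x + h₂ + h₃)
        + φ (x + h₁) + φ (x + h₂) + φ (x + h₃) - φ x = 0

lemma mem_bohr_iff' {S : Finset (G →+ AddCircle (1 : ℝ))} {ρ : ℝ} {x : G} :
    x ∈ bohr S ρ ↔ ∀ α ∈ S, ‖α x‖ < ρ := by
  simp [bohr]

lemma zero_mem_bohr' {S : Finset (G →+ AddCircle (1 : ℝ))} {ρ : ℝ} (hρ : 0 < ρ) :
    (0 : G) ∈ bohr S ρ := by
  rw [mem_bohr_iff']; intro α _; simp [hρ]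

lemma add_mem_bohr' {S : Finset (G →+ AddCircle (1 : ℝ))} {ρ₁ ρ₂ : ℝ} {x y : G}
    (hx : x ∈ bohr S ρ₁) (hy : y ∈ bohr S ρ₂) : x + y ∈ bohr S (ρ₁ + ρ₂) := by
  rw [mem_bohr_iff'] at *
  intro α hα
  calc ‖α (x + y)‖ = ‖α x + α y‖ := by rw [map_add]
    _ ≤ ‖α x‖ + ‖α y‖ := norm_add_le _ _
    _ < ρ₁ + ρ₂ := add_lt_add (hx α hα) (hy α hα)

lemma bohr_mono' {S : Finset (G →+ AddCircle (1 : ℝ))} {ρ₁ ρ₂ : ℝ} (h : ρ₁ ≤ ρ₂) :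
    bohr S ρ₁ ⊆ bohr S ρ₂ := by
  intro x hx
  rw [mem_bohr_iff'] at *
  exact fun α hα => lt_of_lt_of_le (hx α hα) h

lemma two_torsion_eq_zero' {x : AddCircle (1 : ℝ)} (h2 : (2 : ℤ) • x = 0)
    (hn : ‖x‖ < 1 / 2) : x = 0 := by
  induction x using QuotientAddGroup.induction_on with
  | H r =>
  have : ((2 * r : ℝ) : AddCircle (1 : ℝ)) = 0 := by
    rw [← h2, two_zsmul, two_mul, AddCircle.coe_add]
  rw [AddCircle.coe_eq_zero_iff] at this
  obtain ⟨n, hn'⟩ := this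
  have hr : r = n / 2 := by
    have : (n : ℝ) = 2 * r := by simpa using hn'
    linarith
  rcases Int.even_or_odd n with ⟨m, hm⟩ | ⟨m, hm⟩
  · rw [AddCircle.coe_eq_zero_iff]
    exact ⟨m, by rw [zsmul_eq_mul, hr, hm]; push_cast; ring⟩
  · exfalso
    have : ‖((r : ℝ) : AddCircle (1 : ℝ))‖ = 1 / 2 := by
      rw [AddCircle.norm_eq]
      subst hr hm
      push_cast
      have : ((2 * (m:ℝ) + 1) / 2) = (m : ℝ) + 1/2 := by ring
      rw [this]
      have h1 : round ((m : ℝ) + 1/2) = m + 1 := by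
        rw [round_eq]
        have : (m : ℝ) + 1/2 + 1/2 = (m + 1 : ℤ) := by push_cast; ring
        rw [this, Int.floor_intCast]
      simp only [inv_one, one_mul, mul_one]
      rw [h1]
      push_cast
      rw [abs_of_nonpos] <;> linarith
    rw [this] at hn; linarith

/-- Given a locally quadratic `φ` with associated bilinear form
`φ''(a,b) = φ(a+b) − φ(a) − φ(b) + φ(0)` satisfying `‖φ''‖_{ℝ/ℤ} ≤ 1/10`, and a choice
`half : G → ℝ/ℤ` of `(1/2)φ''(n,n)` taking values in `[−1/20, 1/20]`, the function
`ψ(n) = φ(n) − half(n)` is locally affine-linear: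

`ψ(a+b) − ψ(a) − ψ(b)` is constant over pairs `a, b` with `a, b, a+b` in the Bohr set. -/
theorem locally_affine_linear_part
    (S : Finset (G →+ AddCircle (1 : ℝ))) (ρ : ℝ) (hρ : 0 < ρ)
    (φ : G → AddCircle (1 : ℝ)) (hφ : IsLocallyQuadratic S ρ φ)
    (hsmall : ∀ a b : G, a ∈ bohr S ρ → b ∈ bohr S ρ →
      ‖φ (a + b) - φ a - φ b + φ 0‖ ≤ 1 / 10)
    (half : G → AddCircle (1 : ℝ))
    (hhalf : ∀ n : G, n ∈ bohr S ρ →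
      (2 : ℤ) • half n = φ (n + n) - φ n - φ n + φ 0 ∧ ‖half n‖ ≤ 1 / 20) :
    ∀ a b a' b' : G,
      a ∈ bohr S ρ → b ∈ bohr S ρ → a + b ∈ bohr S ρ →
      a' ∈ bohr S ρ → b' ∈ bohr S ρ → a' + b' ∈ bohr S ρ →
      (φ (a + b) - half (a + b)) - (φ a - half a) - (φ b - half b) =
        (φ (a' + b') - half (a' + b')) - (φ a' - half a') - (φ b' - half b') := by
  have hρ16 : (0:ℝ) < 16 * ρ := by linarith
  have A1 : ∀ {x : G}, x ∈ bohr S ρ → x ∈ bohr S (16 * ρ) :=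
    fun hx => bohr_mono' (by linarith) hx
  have A2 : ∀ {x y : G}, x ∈ bohr S ρ → y ∈ bohr S ρ → x + y ∈ bohr S (16 * ρ) :=
    fun hx hy => bohr_mono' (by linarith) (add_mem_bohr' hx hy)
  have A3 : ∀ {x y z : G}, x ∈ bohr S ρ → y ∈ bohr S ρ → z ∈ bohr S ρ →
      x + y + z ∈ bohr S (16 * ρ) :=
    fun hx hy hz => bohr_mono' (by linarith) (add_mem_bohr' (add_mem_bohr' hx hy) hz)
  have key : ∀ a b : G, a ∈ bohr S ρ → b ∈ bohr S ρ → a + b ∈ bohr S ρ →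
      (φ (a + b) - half (a + b)) - (φ a - half a) - (φ b - half b) = - φ 0 := by
    intro a b ha hb hab
    have e1 := hφ 0 a b (a + b) (zero_mem_bohr' hρ16)
      (by rw [zero_add]; exact A1 ha) (by rw [zero_add]; exact A1 hb)
      (by rw [zero_add]; exact A1 hab) (by rw [zero_add]; exact A2 ha hb)
      (by rw [zero_add]; exact A2 ha hab) (by rw [zero_add]; exact A2 hb hab)
      (by rw [zero_add]; exact A2 hab hab)
    have e2 := hφ 0 a a b (zero_mem_bohr' hρ16)
      (by rw [zero_add]; exact A1 ha) (by rw [zero_add]; exact A1 ha)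
      (by rw [zero_add]; exact A1 hb) (by rw [zero_add]; exact A2 ha ha)
      (by rw [zero_add]; exact A2 ha hb) (by rw [zero_add]; exact A2 ha hb)
      (by rw [zero_add]; exact A3 ha ha hb)
    have e3 := hφ 0 b b a (zero_mem_bohr' hρ16)
      (by rw [zero_add]; exact A1 hb) (by rw [zero_add]; exact A1 hb)
      (by rw [zero_add]; exact A1 ha) (by rw [zero_add]; exact A2 hb hb)
      (by rw [zero_add]; exact A2 hb ha) (by rw [zero_add]; exact A2 hb ha)
      (by rw [zero_add]; exact A3 hb hb ha)
    simp only [zero_add] at e1 e2 e3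
    rw [show a + (a + b) = a + a + b from by abel,
        show b + (a + b) = b + b + a from by abel] at e1
    rw [show b + a = a + b from add_comm b a] at e3
    have htot := congrArg₂ (· + ·) (congrArg₂ (· + ·) e1 e2) e3
    simp only [add_zero] at htot
    have hquad : (φ (a + b + (a + b)) - φ (a + b) - φ (a + b) + φ 0)
        - (φ (a + a) - φ a - φ a + φ 0) - (φ (b + b) - φ b - φ b + φ 0)
        - (2 : ℤ) • (φ (a + b) - φ a - φ b + φ 0) = 0 := by
      rw [← htot]; abel
    set d := half (a + b) - half a - half b - (φ (a + b) - φ a - φ b + φ 0) with hd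
    have h2d : (2 : ℤ) • d = 0 := by
      rw [hd, smul_sub, smul_sub, smul_sub, (hhalf a ha).1, (hhalf b hb).1,
        (hhalf (a + b) hab).1]
      exact hquad
    have hnormd : ‖d‖ < 1 / 2 := by
      have h1 := (hhalf a ha).2
      have h2 := (hhalf b hb).2
      have h3 := (hhalf (a + b) hab).2
      have h4 := hsmall a b ha hb
      calc ‖d‖ ≤ ‖half (a + b) - half a - half b‖ + ‖φ (a + b) - φ a - φ b + φ 0‖ :=
            norm_sub_le _ _
        _ ≤ (‖half (a + b) - half a‖ + ‖half b‖) + ‖φ (a + b) - φ a - φ b + φ 0‖ := by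
            gcongr; exact norm_sub_le _ _
        _ ≤ ((‖half (a + b)‖ + ‖half a‖) + ‖half b‖) + ‖φ (a + b) - φ a - φ b + φ 0‖ := by
            gcongr; exact norm_sub_le _ _
        _ < 1 / 2 := by linarith
    have hd0 : d = 0 := two_torsion_eq_zero' h2d hnormd
    rw [hd] at hd0
    have hkey : half (a + b) - half a - half b = φ (a + b) - φ a - φ b + φ 0 :=
      sub_eq_zero.mp hd0
    calc (φ (a + b) - half (a + b)) - (φ a - half a) - (φ b - half b)
        = (φ (a + b) - φ a - φ b + φ 0) - (half (a + b) - half a - half b) - φ 0 := by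
          abel
      _ = - φ 0 := by rw [hkey]; abel
  intro a b a' b' ha hb hab ha' hb' hab'
  rw [key a b ha hb hab, key a' b' ha' hb' hab']

end
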